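/- arXiv:1704.08358 — 3 statements merged into one kernel-verified Lean document; each statement's English description precedes it below -/
import Mathlib

section
/- Let p≥3 be prime and k∈ℕ. Then i^k·x_k(r;p) lies in the cyclotomic field ℚ(ζ_p). More precisely, if k is even then x_k(r;p) ∈ ℚ(ζ_p)^+ (the maximal real subfield), and if k is odd then x_k(r;p) ∈ ℚ(ζ_{4p})^+. -/
/-!
With `ζ = exp (2πi/p)` one has `i cot (πv/p) = (ζ^v + 1)/(ζ^v - 1)`, so `i^k x_k(r;p)` is a
rational expression in `ζ`. For even `k`, `i^k = ±1`, so the real number `x_k(r;p)` lies in `ℚ(ζ)`;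
for any `k` it lies in `ℚ(ξ)` with `ξ = exp (2πi/(4p))`, since `ζ = ξ^4` and `i = ξ^p`.
A real element `f(w)` of `ℚ(w)`, for `w` a root of unity, lies in `ℚ(w + w⁻¹)`: complex conjugation
sends `w` to `w⁻¹`, so `2 f(w) = f(w) + f(w⁻¹)` is a rational combination of the `w^n + w⁻ⁿ`,
which are (Dickson) polynomials in `w + w⁻¹`.
-/

open scoped Real

noncomputable def xk (k p : ℕ) [NeZero p] (r : ZMod p) : ℝ :=
  ((p : ℝ))⁻¹ ^ k *
    ∑ m ∈ Finset.univ.filter (fun m : Fin k → (ZMod p)ˣ => ∏ i, ((m i : ZMod p)) = r),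
      ∏ i, Real.cot (π * ((m i : ZMod p).val : ℝ) / p)

/-- The `k`-fold divisor function. -/
def dk (k n : ℕ) : ℕ :=
  ((Fintype.piFinset fun _ : Fin k => Finset.range (n + 1)).filter
    (fun f => ∏ i, f i = n)).card

open Complex Polynomial IntermediateField

section RealSubfield

variable {F E : Type*} [Field F] [Field E] [Algebra F E]

theorem pow_add_inv_pow_mem_adjoin {w : E} (hw : w ≠ 0) (n : ℕ) :
    w ^ n + w⁻¹ ^ n ∈ F⟮w + w⁻¹⟯ := by
  rw [← dickson_one_one_eval_add_inv w w⁻¹ (mul_inv_cancel₀ hw), ← map_one (algebraMap F E),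
    ← map_dickson, eval_map_algebraMap]
  exact algebra_adjoin_le_adjoin F _ (aeval_mem_adjoin_singleton F _)

theorem mem_adjoin_add_inv_of_fixed [NeZero (2 : E)] (σ : E →ₐ[F] E) {w z : E}
    (hw : IsAlgebraic F w) (hw0 : w ≠ 0) (hσw : σ w = w⁻¹) (hz : z ∈ F⟮w⟯) (hσz : σ z = z) :
    z ∈ F⟮w + w⁻¹⟯ := by
  rw [← mem_toSubalgebra, adjoin_simple_toSubalgebra_of_isAlgebraic hw,
    Algebra.adjoin_singleton_eq_range_aeval] at hz
  obtain ⟨f, rfl⟩ : ∃ f, aeval w f = z := hz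
  have hsum : aeval w f + σ (aeval w f) ∈ F⟮w + w⁻¹⟯ := by
    rw [← aeval_algHom_apply, hσw, aeval_eq_sum_range, aeval_eq_sum_range,
      ← Finset.sum_add_distrib]
    exact sum_mem fun i _ => smul_add (f.coeff i) (w ^ i) (w⁻¹ ^ i) ▸
      smul_mem _ (pow_add_inv_pow_mem_adjoin hw0 i)
  rw [hσz, ← two_mul] at hsum
  have h2 : (2 : E) ∈ F⟮w + w⁻¹⟯ := ofNat_mem _ 2
  simpa only [inv_mul_cancel_left₀ (two_ne_zero : (2 : E) ≠ 0)] using mul_mem (inv_mem h2) hsum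

end RealSubfield

theorem I_mul_cot_mem (K : IntermediateField ℚ ℂ) {x : ℂ} (hx : exp (2 * I * x) ∈ K) :
    I * cot x ∈ K := by
  have : I * cot x = (exp (2 * I * x) + 1) / (1 - exp (2 * I * x)) := by
    rw [cot_eq_exp_ratio, mul_div_assoc', mul_div_mul_left _ _ I_ne_zero]
  rw [this]
  exact div_mem (add_mem hx (one_mem K)) (sub_mem (one_mem K) hx)

theorem ofReal_mem_adjoin_add_inv {w : ℂ} {n : ℕ} (hw : IsPrimitiveRoot w n) (hn : n ≠ 0)
    {x : ℝ} (hx : (x : ℂ) ∈ ℚ⟮w⟯) : (x : ℂ) ∈ ℚ⟮w + w⁻¹⟯ :=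
  mem_adjoin_add_inv_of_fixed (conjAe.toAlgHom.restrictScalars ℚ)
    ((hw.isIntegral (Nat.pos_of_ne_zero hn)).tower_top.isAlgebraic) (hw.ne_zero hn)
    (inv_eq_conj (hw.norm'_eq_one hn)).symm hx (conj_ofReal x)

section CotangentSums

variable {k p : ℕ} [NeZero p]

theorem I_pow_mul_xk (r : ZMod p) :
    I ^ k * (xk k p r : ℂ) = (p : ℂ)⁻¹ ^ k *
      ∑ m ∈ Finset.univ.filter (fun m : Fin k → (ZMod p)ˣ => ∏ i, ((m i : ZMod p)) = r),
        ∏ i, I * cot (π * ((m i : ZMod p).val : ℕ) / p) := by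
  simp only [xk, ofReal_mul, ofReal_pow, ofReal_inv, ofReal_natCast, ofReal_sum, ofReal_prod,
    ofReal_cot, ofReal_div, Finset.mul_sum, Finset.prod_mul_distrib, Finset.prod_const,
    Finset.card_univ, Fintype.card_fin]
  exact Finset.sum_congr rfl fun _ _ => mul_left_comm _ _ _

theorem I_pow_mul_xk_mem (K : IntermediateField ℚ ℂ) (hζ : exp (2 * π * I / p) ∈ K)
    (r : ZMod p) : I ^ k * (xk k p r : ℂ) ∈ K := by
  rw [I_pow_mul_xk]
  refine mul_mem (pow_mem (inv_mem (IntermediateField.natCast_mem K p)) k)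
    (sum_mem fun m _ => prod_mem fun i _ => I_mul_cot_mem K ?_)
  have : exp (2 * I * (π * ((m i : ZMod p).val : ℕ) / p)) =
      exp (2 * π * I / p) ^ (m i : ZMod p).val := by
    rw [← exp_nat_mul]; congr 1; ring
  exact this ▸ pow_mem hζ _

theorem xk_mem (K : IntermediateField ℚ ℂ) (hζ : exp (2 * π * I / p) ∈ K) (hI : I ^ k ∈ K)
    (r : ZMod p) : (xk k p r : ℂ) ∈ K := by
  rw [← inv_mul_cancel_left₀ (pow_ne_zero k I_ne_zero) (xk k p r : ℂ)]
  exact mul_mem (inv_mem hI) (I_pow_mul_xk_mem K hζ r)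

end CotangentSums

theorem stmt2_general (p k : ℕ) [NeZero p] (r : ℤ) :
    (Complex.I ^ k * (xk k p (r : ZMod p) : ℂ) ∈
      IntermediateField.adjoin ℚ {Complex.exp (2 * π * Complex.I / p)}) ∧
    (Even k → (xk k p (r : ZMod p) : ℂ) ∈
      IntermediateField.adjoin ℚ
        {Complex.exp (2 * π * Complex.I / p) + (Complex.exp (2 * π * Complex.I / p))⁻¹}) ∧
    (Odd k → (xk k p (r : ZMod p) : ℂ) ∈
      IntermediateField.adjoin ℚ
        {Complex.exp (2 * π * Complex.I / (4 * p)) +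
          (Complex.exp (2 * π * Complex.I / (4 * p)))⁻¹}) := by
  set ζ := exp (2 * π * I / p)
  set ξ := exp (2 * π * I / (4 * p))
  have hp : p ≠ 0 := NeZero.ne p
  have hζ : IsPrimitiveRoot ζ p := isPrimitiveRoot_exp p hp
  have hξ : IsPrimitiveRoot ξ (4 * p) := by
    simpa only [Nat.cast_mul, Nat.cast_ofNat] using isPrimitiveRoot_exp (4 * p) (by positivity)
  have hζξ : ζ ∈ ℚ⟮ξ⟯ := by
    have : ξ ^ 4 = ζ := by rw [← exp_nat_mul]; congr 1; push_cast; field_simp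
    exact this ▸ pow_mem (mem_adjoin_simple_self ℚ ξ) 4
  have hIξ : I ∈ ℚ⟮ξ⟯ := by
    have : ξ ^ p = I := by
      rw [← exp_nat_mul]; convert exp_pi_div_two_mul_I using 2; field_simp; ring
    exact this ▸ pow_mem (mem_adjoin_simple_self ℚ ξ) p
  refine ⟨I_pow_mul_xk_mem _ (mem_adjoin_simple_self ℚ ζ) _, fun ⟨t, ht⟩ => ?_, fun _ => ?_⟩
  · have hIk : I ^ k ∈ ℚ⟮ζ⟯ := by
      rw [ht, ← two_mul, pow_mul, I_sq]
      exact pow_mem (neg_mem (one_mem _)) t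
    exact ofReal_mem_adjoin_add_inv hζ hp (xk_mem _ (mem_adjoin_simple_self ℚ ζ) hIk _)
  · exact ofReal_mem_adjoin_add_inv hξ (by positivity) (xk_mem _ hζξ (pow_mem hIξ k) _)

theorem stmt2 (p k : ℕ) [NeZero p] (hp : p.Prime) (hp3 : 3 ≤ p) (r : ℤ) :
    (Complex.I ^ k * (xk k p (r : ZMod p) : ℂ) ∈
      IntermediateField.adjoin ℚ {Complex.exp (2 * π * Complex.I / p)}) ∧
    (Even k → (xk k p (r : ZMod p) : ℂ) ∈
      IntermediateField.adjoin ℚ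
        {Complex.exp (2 * π * Complex.I / p) + (Complex.exp (2 * π * Complex.I / p))⁻¹}) ∧
    (Odd k → (xk k p (r : ZMod p) : ℂ) ∈
      IntermediateField.adjoin ℚ
        {Complex.exp (2 * π * Complex.I / (4 * p)) +
          (Complex.exp (2 * π * Complex.I / (4 * p)))⁻¹}) :=
  stmt2_general p k r
end

section
/- Let p≥3 be prime, k∈ℕ, and for c coprime to p let σ_c be the automorphism of ℚ(ζ_p) sending ζ_p to ζ_p^c. Then σ_c(i^k·x_k(r;p)) = i^k·x_k(c^k·r; p) for all integers r. -/
open scoped Real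

/-!
With `ζ = exp (2πi/p)` one has `i · cot (π a / p) = -(ζ^a + 1) / (ζ^a - 1)`, so `i^k · x_k(r; p)`
is a rational expression in `ζ` with rational coefficients. Since `σ ζ = ζ^c`, applying `σ`
replaces each `ζ^(m_j)` by `ζ^(c m_j)`; substituting `m ↦ c • m` in the sum multiplies the
product constraint `∏ m_j = r` by `c^k`.
-/

open Finset Complex

section CotOfRoot

variable {L : Type*} [Field L] {p : ℕ}

def cotOfRoot (z : L) (a : ZMod p) : L :=
  -((z ^ a.val + 1) / (z ^ a.val - 1))

def xkOfRoot [NeZero p] (k : ℕ) (z : L) (s : ZMod p) : L :=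
  (p : L)⁻¹ ^ k *
    ∑ m ∈ univ.filter (fun m : Fin k → (ZMod p)ˣ => ∏ i, (m i : ZMod p) = s),
      ∏ i, cotOfRoot z (m i : ZMod p)

theorem map_cotOfRoot {L' F : Type*} [Field L'] [FunLike F L L'] [RingHomClass F L L']
    (φ : F) (z : L) (a : ZMod p) : φ (cotOfRoot z a) = cotOfRoot (φ z) a := by
  simp [cotOfRoot]

theorem map_xkOfRoot [NeZero p] {L' F : Type*} [Field L'] [FunLike F L L'] [RingHomClass F L L']
    (φ : F) (k : ℕ) (z : L) (s : ZMod p) : φ (xkOfRoot k z s) = xkOfRoot k (φ z) s := by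
  simp [xkOfRoot, map_cotOfRoot]

theorem cotOfRoot_pow_val {z : L} (hz : z ^ p = 1) (b a : ZMod p) :
    cotOfRoot (z ^ b.val) a = cotOfRoot z (b * a) := by
  simp only [cotOfRoot, ← pow_mul, ZMod.val_mul, ← pow_eq_pow_mod _ hz]

/-- Galois conjugation `z ↦ z ^ u` permutes the tuples `m` by `m ↦ u • m`. -/
theorem xkOfRoot_pow_val [NeZero p] {z : L} (hz : z ^ p = 1) (k : ℕ) (u : (ZMod p)ˣ) (s : ZMod p) :
    xkOfRoot k (z ^ (u : ZMod p).val) s = xkOfRoot k z ((u : ZMod p) ^ k * s) := by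
  unfold xkOfRoot
  congr 1
  rw [sum_filter, sum_filter, eq_comm, ← Equiv.sum_comp (Equiv.mulLeft fun _ : Fin k => u)]
  refine sum_congr rfl fun m _ => ?_
  simp only [Equiv.coe_mulLeft, Pi.mul_apply, Units.val_mul, prod_mul_distrib, prod_const,
    card_univ, Fintype.card_fin, cotOfRoot_pow_val hz, (u.isUnit.pow k).mul_right_inj]

end CotOfRoot

/-- Also valid at the poles, where both sides are `0` by the convention `x / 0 = 0`. -/
theorem Complex.I_mul_cot (z : ℂ) :
    I * cot z = -((exp (2 * I * z) + 1) / (exp (2 * I * z) - 1)) := by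
  rw [cot_eq_exp_ratio, ← neg_sub (exp _) 1, mul_neg, div_neg, mul_neg, mul_div_assoc',
    mul_div_mul_left _ _ I_ne_zero]

theorem I_mul_cot_eq_cotOfRoot (p : ℕ) [NeZero p] (a : ZMod p) :
    I * (Real.cot (π * a.val / p) : ℂ) = cotOfRoot (exp (2 * π * I / p)) a := by
  rw [ofReal_cot, I_mul_cot, cotOfRoot, ← exp_nat_mul]
  push_cast
  ring_nf

theorem I_pow_mul_xk_s3 (k p : ℕ) [NeZero p] (s : ZMod p) :
    I ^ k * (xk k p s : ℂ) = xkOfRoot k (exp (2 * π * I / p)) s := by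
  simp only [xk, xkOfRoot, ← I_mul_cot_eq_cotOfRoot, prod_mul_distrib, prod_const, card_univ,
    Fintype.card_fin, ← mul_sum]
  push_cast
  ring

theorem zpow_eq_pow_val_intCast {G₀ : Type*} [GroupWithZero G₀] {n : ℕ} [NeZero n] {z : G₀}
    (hz : z ^ n = 1) (c : ℤ) : z ^ c = z ^ (c : ZMod n).val := by
  lift z to G₀ˣ using IsUnit.of_pow_eq_one hz (NeZero.ne n)
  norm_cast at hz ⊢
  rw [zpow_eq_zpow_emod' c hz, ← ZMod.val_intCast, zpow_natCast]

theorem stmt3_general (p k : ℕ) [NeZero p]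
    (c : ℤ) (hc : Int.gcd c p = 1)
    (K : IntermediateField ℚ ℂ)
    (σ : K ≃ₐ[ℚ] K)
    (hζ : Complex.exp (2 * π * Complex.I / p) ∈ K)
    (hσ : (σ ⟨Complex.exp (2 * π * Complex.I / p), hζ⟩ : ℂ) =
      Complex.exp (2 * π * Complex.I / p) ^ c) :
    ∀ (r : ℤ) (hx : Complex.I ^ k * (xk k p (r : ZMod p) : ℂ) ∈ K),
      (σ ⟨Complex.I ^ k * (xk k p (r : ZMod p) : ℂ), hx⟩ : ℂ) =
        Complex.I ^ k * (xk k p ((c ^ k * r : ℤ) : ZMod p) : ℂ) := by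
  intro r hx
  set ζ : K := ⟨_, hζ⟩
  have hζp : (ζ : ℂ) ^ p = 1 := (isPrimitiveRoot_exp p (NeZero.ne p)).pow_eq_one
  have hσζ : σ ζ = ζ ^ (c : ZMod p).val := Subtype.ext <| by
    rw [hσ, zpow_eq_pow_val_intCast hζp]
    rfl
  have hcoe (s : ZMod p) : ((xkOfRoot k ζ s : K) : ℂ) = I ^ k * xk k p s := by
    rw [I_pow_mul_xk_s3]
    exact map_xkOfRoot K.val k ζ s
  have hcop : IsCoprime c p := Int.isCoprime_iff_gcd_eq_one.mpr hc
  have hx' : (⟨_, hx⟩ : K) = xkOfRoot k ζ (r : ZMod p) := Subtype.ext (hcoe r).symm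
  rw [hx', map_xkOfRoot, hσζ, ← ZMod.coe_unitOfIsCoprime c hcop,
    xkOfRoot_pow_val (Subtype.ext hζp), hcoe]
  push_cast
  rfl

theorem stmt3 (p k : ℕ) [NeZero p] (hp : p.Prime) (hp3 : 3 ≤ p)
    (c : ℤ) (hc : Int.gcd c p = 1)
    (K : IntermediateField ℚ ℂ)
    (hK : K = IntermediateField.adjoin ℚ {Complex.exp (2 * π * Complex.I / p)})
    (σ : K ≃ₐ[ℚ] K)
    (hζ : Complex.exp (2 * π * Complex.I / p) ∈ K)
    (hσ : (σ ⟨Complex.exp (2 * π * Complex.I / p), hζ⟩ : ℂ) =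
      Complex.exp (2 * π * Complex.I / p) ^ c) :
    ∀ (r : ℤ) (hx : Complex.I ^ k * (xk k p (r : ZMod p) : ℂ) ∈ K),
      (σ ⟨Complex.I ^ k * (xk k p (r : ZMod p) : ℂ), hx⟩ : ℂ) =
        Complex.I ^ k * (xk k p ((c ^ k * r : ℤ) : ZMod p) : ℂ) :=
  stmt3_general p k c hc K σ hζ hσ
end

section
/- Let m≥1 and v=(v_0,...,v_{m-1})∈ℂ^m. Let A_-(v) be the m×m matrix with (i,j)-entry (0-indexed) equal to v_{i+j} if i+j<m and -v_{i+j-m} if i+j≥m (the skew-circulant Hankel-type matrix). Then det(A_-(v)) = (sin(πm/2) + cos(πm/2)) · Π_{ℓ odd, 0≤ℓ<2m} (Σ_{j=0}^{m-1} v_j ζ_{2m}^{jℓ}), where ζ_{2m} = e^{πi/m}. -/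
/-!
Let `ζ` be a primitive `2m`-th root of unity and `x_k = ζ^(2k+1)`, so that the `x_k` are the `m`
distinct roots of `X^m = -1`. Because `x_k^m = -1`, the row `i` of `A_-(v)` applied to
`(1, x_k, …, x_k^(m-1))` is `x_k^(-i) · f(x_k)` with `f(X) = ∑ v_j X^j`, and `x_k^(-1) = x_{m-1-k}`.
Hence `A_-(v) V = V' · diag(f(x_k))`, where `V` is the Vandermonde matrix of the `x_k` and `V'` is `V`
with its columns reversed. Cancelling `det V ≠ 0` leaves the sign of the reversal,
`(-1)^(m choose 2) = sin(πm/2) + cos(πm/2)`.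
-/

open scoped Real
open Equiv Finset Matrix

theorem Fin.sign_revPerm (n : ℕ) : Perm.sign (Fin.revPerm : Perm (Fin n)) = (-1) ^ n.choose 2 := by
  induction n with
  | zero => rfl
  | succ n ih =>
    -- reversing `Fin (n+1)` is reversing the last `n` entries, then rotating
    have hrev : (Fin.revPerm : Perm (Fin (n + 1))) =
        (finRotate (n + 1))⁻¹ * Perm.decomposeFin.symm (0, Fin.revPerm) := by
      rw [eq_inv_mul_iff_mul_eq]
      ext i
      refine Fin.cases ?_ (fun x => ?_) i
      · simp [Fin.rev_zero]
      · simpa [Fin.val_add, Fin.val_rev] using x.pos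
    rw [hrev, map_mul, map_inv, sign_finRotate, Perm.decomposeFin.symm_sign, ih,
      Nat.choose_succ_succ, Nat.choose_one_right, pow_add]
    simp

theorem Real.sin_add_cos_pi_mul_div_two (n : ℕ) :
    Real.sin (π * n / 2) + Real.cos (π * n / 2) = (-1) ^ n.choose 2 := by
  induction n using Nat.twoStepInduction with
  | zero => simp
  | one => simp
  | more n ih _ =>
    have hchoose : (n + 2).choose 2 = n.choose 2 + 2 * n + 1 := by
      simp only [Nat.choose_succ_succ, Nat.choose_one_right, Nat.choose_zero_right]
      ring
    rw [show π * ((n + 2 : ℕ) : ℝ) / 2 = π * n / 2 + π by push_cast; ring, Real.sin_add_pi,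
      Real.cos_add_pi, hchoose, pow_succ, pow_add, pow_mul, neg_one_sq, one_pow, ← ih]
    ring

theorem Finset.prod_filter_odd_range_two_mul {M : Type*} [CommMonoid M] (g : ℕ → M) (n : ℕ) :
    ∏ l ∈ (range (2 * n)).filter Odd, g l = ∏ k ∈ range n, g (2 * k + 1) := by
  induction n with
  | zero => simp
  | succ n ih =>
    rw [mul_add_one, range_add_one, range_add_one, filter_insert, filter_insert,
      if_pos (odd_two_mul_add_one n), if_neg (Nat.not_odd_iff_even.2 (even_two_mul n)),
      prod_insert (by simp), ih, prod_range_succ, mul_comm]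

/-- `IsSkewHankel v A` says that `A = A_-(v)`. -/
def IsSkewHankel {R : Type*} [Neg R] {m : ℕ} (v : Fin m → R) (A : Matrix (Fin m) (Fin m) R) :
    Prop :=
  ∀ i j : Fin m,
    if h : (i : ℕ) + (j : ℕ) < m then A i j = v ⟨(i : ℕ) + (j : ℕ), h⟩
    else ∀ h' : (i : ℕ) + (j : ℕ) - m < m, A i j = -v ⟨(i : ℕ) + (j : ℕ) - m, h'⟩

section SkewHankel

variable {R : Type*} [CommRing R] {m : ℕ} {v : Fin m → R} {A : Matrix (Fin m) (Fin m) R}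

theorem IsSkewHankel.apply_mul_pow (hA : IsSkewHankel v A) {x : R} (hx : x ^ m = -1)
    (i j : Fin m) : A i j * x ^ ((i : ℕ) + j) = v (i + j) * x ^ ((i + j : Fin m) : ℕ) := by
  have hij := hA i j
  split_ifs at hij with h
  · rw [hij, Fin.add_def]
    simp only [Nat.mod_eq_of_lt h]
  · have h' : (i : ℕ) + j - m < m := by omega
    have hval : ((i + j : Fin m) : ℕ) = (i : ℕ) + j - m := by
      rw [Fin.val_add, Nat.mod_eq_sub_mod (by omega), Nat.mod_eq_of_lt h']
    have hv : v ⟨(i : ℕ) + j - m, h'⟩ = v (i + j) := congrArg v (Fin.ext hval.symm)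
    have hpow : x ^ ((i : ℕ) + j) = -x ^ ((i : ℕ) + j - m) := by
      rw [← mul_neg_one, ← hx, ← pow_add, Nat.sub_add_cancel (by omega)]
    rw [hij h', hv, hval, hpow]
    ring

theorem IsSkewHankel.sum_mul_pow_mul_pow (hA : IsSkewHankel v A) {x : R} (hx : x ^ m = -1)
    (i : Fin m) : (∑ j, A i j * x ^ (j : ℕ)) * x ^ (i : ℕ) = ∑ j, v j * x ^ (j : ℕ) := by
  have : NeZero m := ⟨i.pos.ne'⟩
  calc (∑ j, A i j * x ^ (j : ℕ)) * x ^ (i : ℕ)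
      = ∑ j, v (i + j) * x ^ ((i + j : Fin m) : ℕ) := by
        rw [sum_mul]
        refine sum_congr rfl fun j _ => ?_
        rw [mul_assoc, ← pow_add, add_comm (j : ℕ), hA.apply_mul_pow hx]
    _ = ∑ j, v j * x ^ (j : ℕ) := Fintype.sum_equiv (Equiv.addLeft i) _ _ fun _ => rfl

theorem IsSkewHankel.mul_vandermonde_odd_pow (hA : IsSkewHankel v A) {ζ : R} (hζ : ζ ^ m = -1) :
    A * (vandermonde (fun k : Fin m => ζ ^ (2 * (k : ℕ) + 1)))ᵀ =
      ((vandermonde (fun k : Fin m => ζ ^ (2 * (k : ℕ) + 1)))ᵀ).submatrix id Fin.revPerm *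
        diagonal fun k : Fin m => ∑ j, v j * (ζ ^ (2 * (k : ℕ) + 1)) ^ (j : ℕ) := by
  ext i k
  have hxk : (ζ ^ (2 * (k : ℕ) + 1)) ^ m = -1 := by
    rw [← pow_mul, mul_comm, pow_mul, hζ, Odd.neg_one_pow (odd_two_mul_add_one _)]
  have hinv : ζ ^ (2 * ((Fin.rev k : Fin m) : ℕ) + 1) * ζ ^ (2 * (k : ℕ) + 1) = 1 := by
    rw [← pow_add, show 2 * ((Fin.rev k : Fin m) : ℕ) + 1 + (2 * k + 1) = m * 2 by
      rw [Fin.val_rev]; omega, pow_mul, hζ, neg_one_sq]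
  rw [mul_apply, mul_diagonal]
  simp only [submatrix_apply, transpose_apply, vandermonde_apply, id_eq, Fin.revPerm_apply]
  rw [← hA.sum_mul_pow_mul_pow hxk i, mul_left_comm, ← mul_pow, hinv, one_pow, mul_one]

theorem IsSkewHankel.det_eq [IsDomain R] (hA : IsSkewHankel v A) {ζ : R}
    (hζ : IsPrimitiveRoot ζ (2 * m)) (hm : m ≠ 0) :
    A.det = Perm.sign (Fin.revPerm : Perm (Fin m)) *
      ∏ k : Fin m, ∑ j, v j * (ζ ^ (2 * (k : ℕ) + 1)) ^ (j : ℕ) := by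
  have hζm : ζ ^ m = -1 := by
    have h2 : IsPrimitiveRoot (ζ ^ m) 2 := by simpa [hm] using hζ.pow_of_dvd hm (dvd_mul_left m 2)
    exact h2.eq_neg_one_of_two_right
  have hV : (vandermonde (fun k : Fin m => ζ ^ (2 * (k : ℕ) + 1))).det ≠ 0 :=
    det_vandermonde_ne_zero_iff.2 fun a b hab =>
      Fin.ext <| by have := hζ.pow_inj (by omega) (by omega) hab; omega
  have hdet := congrArg det (hA.mul_vandermonde_odd_pow hζm)
  rw [det_mul, det_mul, det_permute', det_diagonal, det_transpose] at hdet
  apply mul_right_cancel₀ hV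
  rw [hdet]
  ring

end SkewHankel

theorem stmt12 (m : ℕ) (hm : 1 ≤ m) (v : Fin m → ℂ)
    (A : Matrix (Fin m) (Fin m) ℂ)
    (hA : ∀ i j : Fin m,
      (if h : (i : ℕ) + (j : ℕ) < m then A i j = v ⟨(i : ℕ) + (j : ℕ), h⟩
       else ∀ h' : (i : ℕ) + (j : ℕ) - m < m, A i j = -v ⟨(i : ℕ) + (j : ℕ) - m, h'⟩)) :
    A.det = ((Real.sin (π * m / 2) + Real.cos (π * m / 2) : ℝ) : ℂ) *
      ∏ l ∈ (Finset.range (2 * m)).filter (fun l => Odd l), ∑ j : Fin m,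
        v j * Complex.exp (2 * π * Complex.I / (2 * m)) ^ ((j : ℕ) * l) := by
  have hζ : IsPrimitiveRoot (Complex.exp (2 * π * Complex.I / (2 * m))) (2 * m) := by
    simpa using Complex.isPrimitiveRoot_exp (2 * m) (by omega)
  rw [IsSkewHankel.det_eq hA hζ (by omega), Fin.sign_revPerm, Real.sin_add_cos_pi_mul_div_two,
    prod_filter_odd_range_two_mul, ← Fin.prod_univ_eq_prod_range]
  simp only [← pow_mul, mul_comm (2 * _ + 1)]
  push_cast
  rfl
end
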